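/- Let O ⊂ ℝ³ be a bounded open set with Lebesgue measure |O|, let k > 0, ε > 0, C_S > 0, M ≥ 0, and let v : ℝ³ → ℝ³ be a C³ vector field such that the operator norm of the Jacobian Dv(x) is at most M for every x ∈ O, and such that 2M + (C_S/2)·|O|^{1/6}·(∫_O |Δ(div v)|² dx)^{1/2} ≤ k. Let λ : ℝ³ → ℝ be a C³ function with compact support contained in O satisfying ‖λ‖_{L⁶(ℝ³)} ≤ √C_S · (∫|∇λ|² dx)^{1/2}, and define G := −εΔλ + kλ + v·∇λ + ½(div v)λ. Then (∫_{ℝ³} |∇λ|² dx)^{1/2} ≤ (2/k) · (∫_{ℝ³} |∇G|² dx)^{1/2}. -/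

import Mathlib

/-! Pair `∇G` with `∇λ` in `L²`. Integrating by parts, the viscous term contributes
`ε ‖Δλ‖² ≥ 0` and the zero-order term `k ‖∇λ‖²`; since `v·∇ + ½ div v` is skew-symmetric, the
transport term leaves only `∫ Dv ∇λ · ∇λ`, at most `M ‖∇λ‖²`, and `-¼ ∫ Δ(div v) λ²`. By
Cauchy–Schwarz, Hölder on `O` and the Sobolev inequality the latter is at most
`¼ C_S |O|^{1/6} ‖Δ div v‖_{L²(O)} ‖∇λ‖²`, so the smallness condition gives
`(k/2) ‖∇λ‖² ≤ ∫ ∇G · ∇λ ≤ ‖∇G‖ ‖∇λ‖`. -/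

open MeasureTheory

noncomputable section

/-- Partial derivative in the `i`-th coordinate direction on `ℝ³`. -/
def pd {F : Type*} [NormedAddCommGroup F] [NormedSpace ℝ F]
    (f : EuclideanSpace ℝ (Fin 3) → F) (i : Fin 3) (x : EuclideanSpace ℝ (Fin 3)) : F :=
  fderiv ℝ f x (EuclideanSpace.single i 1)

/-- Divergence of a vector field on `ℝ³`. -/
def divg (v : EuclideanSpace ℝ (Fin 3) → EuclideanSpace ℝ (Fin 3))
    (x : EuclideanSpace ℝ (Fin 3)) : ℝ :=
  ∑ i, pd (fun y => v y i) i x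

/-- Laplacian on `ℝ³`. -/
def lap {F : Type*} [NormedAddCommGroup F] [NormedSpace ℝ F]
    (f : EuclideanSpace ℝ (Fin 3) → F) (x : EuclideanSpace ℝ (Fin 3)) : F :=
  ∑ i, pd (pd f i) i x


local notation "E3" => EuclideanSpace ℝ (Fin 3)

lemma HasCompactSupport.finsetSum {X M ι : Type*} [TopologicalSpace X] [AddCommMonoid M]
    (s : Finset ι) {f : ι → X → M} (hf : ∀ i ∈ s, HasCompactSupport (f i)) :
    HasCompactSupport (fun x => ∑ i ∈ s, f i x) := by
  classical
  induction s using Finset.induction_on with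
  | empty => exact HasCompactSupport.zero
  | insert a s ha ih =>
    simp_rw [Finset.sum_insert ha]
    exact (hf a (s.mem_insert_self a)).add (ih fun i hi => hf i (Finset.mem_insert_of_mem hi))

section PartialDerivative

variable {F : Type*} [NormedAddCommGroup F] [NormedSpace ℝ F] {f : E3 → F}

lemma tsupport_pd_subset (i : Fin 3) : tsupport (pd f i) ⊆ tsupport f :=
  (tsupport_comp_subset (map_zero (ContinuousLinearMap.apply ℝ F (EuclideanSpace.single i 1)))
    (fderiv ℝ f)).trans (tsupport_fderiv_subset ℝ)

lemma pd_eq_zero_of_notMem_tsupport {x : E3} (hx : x ∉ tsupport f) (i : Fin 3) : pd f i x = 0 :=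
  image_eq_zero_of_notMem_tsupport fun h => hx (tsupport_pd_subset i h)

lemma HasCompactSupport.pd (hf : HasCompactSupport f) (i : Fin 3) : HasCompactSupport (pd f i) :=
  hf.of_isClosed_subset (isClosed_tsupport _) (tsupport_pd_subset i)

lemma contDiff_pd {m n : WithTop ℕ∞} (hf : ContDiff ℝ n f) (hmn : m + 1 ≤ n) (i : Fin 3) :
    ContDiff ℝ m (pd f i) :=
  (hf.fderiv_right hmn).clm_apply contDiff_const

lemma continuous_pd {n : WithTop ℕ∞} (hf : ContDiff ℝ n f) (hn : 1 ≤ n) (i : Fin 3) :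
    Continuous (pd f i) :=
  (contDiff_pd hf (m := 0) (by simpa using hn) i).continuous

end PartialDerivative

lemma HasCompactSupport.lap {f : E3 → ℝ} (hf : HasCompactSupport f) : HasCompactSupport (lap f) :=
  HasCompactSupport.finsetSum _ fun i _ => (hf.pd i).pd i

lemma contDiff_divg {m n : WithTop ℕ∞} {v : E3 → E3} (hv : ContDiff ℝ n v) (hmn : m + 1 ≤ n) :
    ContDiff ℝ m (divg v) :=
  ContDiff.sum fun i _ => contDiff_pd (contDiff_euclidean.1 hv i) hmn i

lemma contDiff_lap {m n : WithTop ℕ∞} {f : E3 → ℝ} (hf : ContDiff ℝ n f) (hmn : m + 2 ≤ n) :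
    ContDiff ℝ m (lap f) :=
  ContDiff.sum fun i _ =>
    contDiff_pd (contDiff_pd hf (m := m + 1) (by rwa [add_assoc, one_add_one_eq_two]) i) le_rfl i

section RealPartialDerivative

variable {f g : E3 → ℝ} {x : E3} {i : Fin 3}

lemma pd_add (hf : DifferentiableAt ℝ f x) (hg : DifferentiableAt ℝ g x) :
    pd (fun y => f y + g y) i x = pd f i x + pd g i x := by
  simp [pd, fderiv_fun_add hf hg]

lemma pd_const_mul (c : ℝ) (hf : DifferentiableAt ℝ f x) :
    pd (fun y => c * f y) i x = c * pd f i x := by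
  simp [pd, fderiv_const_mul hf c]

lemma pd_mul (hf : DifferentiableAt ℝ f x) (hg : DifferentiableAt ℝ g x) :
    pd (fun y => f y * g y) i x = pd f i x * g x + f x * pd g i x := by
  simp only [pd, fderiv_fun_mul hf hg, add_apply, smul_apply, smul_eq_mul]
  ring

lemma pd_sq (hf : DifferentiableAt ℝ f x) : pd (fun y => f y ^ 2) i x = 2 * f x * pd f i x := by
  simp only [sq, pd_mul hf hf]
  ring

lemma pd_sum {ι : Type*} (s : Finset ι) {f : ι → E3 → ℝ}
    (hf : ∀ j ∈ s, DifferentiableAt ℝ (f j) x) :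
    pd (fun y => ∑ j ∈ s, f j y) i x = ∑ j ∈ s, pd (f j) i x := by
  simp [pd, fderiv_fun_sum hf]

lemma pd_pd_comm (hf : ContDiff ℝ 2 f) (i j : Fin 3) (x : E3) :
    pd (pd f j) i x = pd (pd f i) j x := by
  have hd : DifferentiableAt ℝ (fderiv ℝ f) x :=
    (hf.fderiv_right (m := 1) (by norm_num)).differentiable one_ne_zero x
  have second : ∀ a b : Fin 3, pd (pd f b) a x
      = fderiv ℝ (fderiv ℝ f) x (EuclideanSpace.single a 1) (EuclideanSpace.single b 1) := by
    intro a b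
    change fderiv ℝ (fun y => fderiv ℝ f y (EuclideanSpace.single b 1)) x _ = _
    simp [fderiv_clm_apply hd (differentiableAt_const _)]
  rw [second, second]
  exact hf.contDiffAt.isSymmSndFDerivAt (by simp) _ _

lemma pd_apply {v : E3 → E3} (hv : DifferentiableAt ℝ v x) (i j : Fin 3) :
    pd (fun y => v y j) i x = fderiv ℝ v x (EuclideanSpace.single i 1) j := by
  have h : HasFDerivAt (fun y => v y j) ((EuclideanSpace.proj j).comp (fderiv ℝ v x)) x :=
    (EuclideanSpace.proj (𝕜 := ℝ) j).hasFDerivAt.comp x hv.hasFDerivAt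
  rw [pd, h.fderiv]
  rfl

end RealPartialDerivative

section IntegrationByParts

variable {f g : E3 → ℝ}

lemma integral_mul_pd (hf : ContDiff ℝ 1 f) (hg : ContDiff ℝ 1 g) (hfs : HasCompactSupport f)
    (i : Fin 3) : ∫ x, f x * pd g i x = -∫ x, pd f i x * g x :=
  integral_mul_fderiv_eq_neg_fderiv_mul_of_integrable
    (((continuous_pd hf le_rfl i).mul hg.continuous).integrable_of_hasCompactSupport
      (hfs.pd i).mul_right)
    ((hf.continuous.mul (continuous_pd hg le_rfl i)).integrable_of_hasCompactSupport
      hfs.mul_right)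
    ((hf.continuous.mul hg.continuous).integrable_of_hasCompactSupport hfs.mul_right)
    (fun x _ => hf.differentiable one_ne_zero x) (fun x _ => hg.differentiable one_ne_zero x)

lemma integral_sum_pd_mul_pd (hf : ContDiff ℝ 1 f) (hfs : HasCompactSupport f)
    (hg : ContDiff ℝ 2 g) : ∫ x, ∑ i, pd f i x * pd g i x = -∫ x, f x * lap g x := by
  have hg' : ∀ i, ContDiff ℝ 1 (pd g i) := fun i => contDiff_pd hg (by norm_num) i
  have hint : ∀ i, Integrable (fun x => pd f i x * pd g i x) := fun i =>
    ((continuous_pd hf le_rfl i).mul (hg' i).continuous).integrable_of_hasCompactSupport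
      (hfs.pd i).mul_right
  have hint' : ∀ i, Integrable (fun x => f x * pd (pd g i) i x) := fun i =>
    (hf.continuous.mul (continuous_pd (hg' i) le_rfl i)).integrable_of_hasCompactSupport
      hfs.mul_right
  simp only [lap, Finset.mul_sum]
  rw [integral_finsetSum _ fun i _ => hint i, integral_finsetSum _ fun i _ => hint' i,
    ← Finset.sum_neg_distrib]
  refine Finset.sum_congr rfl fun i _ => ?_
  rw [integral_mul_pd hf (hg' i) hfs i, neg_neg]

lemma integral_sum_pd_mul_apply {v : E3 → E3} (hf : ContDiff ℝ 1 f) (hfs : HasCompactSupport f)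
    (hv : ContDiff ℝ 1 v) : ∫ x, ∑ j, pd f j x * v x j = -∫ x, f x * divg v x := by
  have hv' : ∀ j, ContDiff ℝ 1 (fun y => v y j) := contDiff_euclidean.1 hv
  have hint : ∀ j, Integrable (fun x => pd f j x * v x j) := fun j =>
    ((continuous_pd hf le_rfl j).mul (hv' j).continuous).integrable_of_hasCompactSupport
      (hfs.pd j).mul_right
  have hint' : ∀ j, Integrable (fun x => f x * pd (fun y => v y j) j x) := fun j =>
    (hf.continuous.mul (continuous_pd (hv' j) le_rfl j)).integrable_of_hasCompactSupport
      hfs.mul_right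
  simp only [divg, Finset.mul_sum]
  rw [integral_finsetSum _ fun j _ => hint j, integral_finsetSum _ fun j _ => hint' j,
    ← Finset.sum_neg_distrib]
  refine Finset.sum_congr rfl fun j _ => ?_
  rw [integral_mul_pd hf (hv' j) hfs j, neg_neg]

lemma integrable_sum_pd_mul_pd (hf : ContDiff ℝ 1 f) (hg : ContDiff ℝ 1 g)
    (hgs : HasCompactSupport g) : Integrable (fun x => ∑ i, pd f i x * pd g i x) :=
  integrable_finsetSum _ fun i _ => ((continuous_pd hf le_rfl i).mul
    (continuous_pd hg le_rfl i)).integrable_of_hasCompactSupport (hgs.pd i).mul_left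

lemma integrable_sum_pd_sq (hf : ContDiff ℝ 1 f) (hfs : HasCompactSupport f) :
    Integrable (fun x => ∑ i, pd f i x ^ 2) := by
  simpa only [sq] using integrable_sum_pd_mul_pd hf hf hfs

lemma memLp_pd {p : ENNReal} (hf : ContDiff ℝ 1 f) (hfs : HasCompactSupport f) (i : Fin 3) :
    MemLp (pd f i) p :=
  (continuous_pd hf le_rfl i).memLp_of_hasCompactSupport (hfs.pd i)

end IntegrationByParts

-- Skew-symmetric on `L²`, which is why only derivatives of `v` survive in
-- `integral_sum_pd_transport_mul_pd`.
def transport (v : E3 → E3) (l : E3 → ℝ) (x : E3) : ℝ :=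
  ∑ j, v x j * pd l j x + 1 / 2 * divg v x * l x

section Transport

variable {v : E3 → E3} {l : E3 → ℝ}

lemma contDiff_transport {n : WithTop ℕ∞} (hv : ContDiff ℝ (n + 1) v) (hl : ContDiff ℝ (n + 1) l) :
    ContDiff ℝ n (transport v l) :=
  (ContDiff.sum fun j _ => ((contDiff_euclidean.1 hv j).of_le le_self_add).mul
    (contDiff_pd hl le_rfl j)).add
    ((contDiff_const.mul (contDiff_divg hv le_rfl)).mul (hl.of_le le_self_add))

lemma hasCompactSupport_transport (hls : HasCompactSupport l) :
    HasCompactSupport (transport v l) :=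
  (HasCompactSupport.finsetSum _ fun j _ => (hls.pd j).mul_left).add hls.mul_left

lemma pd_transport (hv : ContDiff ℝ 2 v) (hl : ContDiff ℝ 2 l) (i : Fin 3) (x : E3) :
    pd (transport v l) i x
      = ∑ j, (pd (fun y => v y j) i x * pd l j x + v x j * pd (pd l i) j x)
        + (1 / 2 * pd (divg v) i x * l x + 1 / 2 * divg v x * pd l i x) := by
  have hvj : ∀ j, DifferentiableAt ℝ (fun y => v y j) x := fun j =>
    (contDiff_euclidean.1 hv j).differentiable (by norm_num) x
  have hlj : ∀ j, DifferentiableAt ℝ (pd l j) x := fun j =>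
    (contDiff_pd hl (m := 1) (by norm_num) j).differentiable one_ne_zero x
  have hl' : DifferentiableAt ℝ l x := hl.differentiable (by norm_num) x
  have hdiv : DifferentiableAt ℝ (fun y => 1 / 2 * divg v y) x :=
    ((contDiff_divg hv (m := 1) (by norm_num)).differentiable one_ne_zero x).const_mul _
  unfold transport
  rw [pd_add (DifferentiableAt.fun_sum fun j _ => (hvj j).fun_mul (hlj j)) (hdiv.fun_mul hl'),
    pd_sum _ fun j _ => (hvj j).fun_mul (hlj j), pd_mul hdiv hl',
    pd_const_mul _ ((contDiff_divg hv (m := 1) (by norm_num)).differentiable one_ne_zero x)]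
  refine congrArg (· + _) (Finset.sum_congr rfl fun j _ => ?_)
  rw [pd_mul (hvj j) (hlj j), pd_pd_comm hl]

lemma sum_pd_transport_mul_pd (hv : ContDiff ℝ 2 v) (hl : ContDiff ℝ 2 l) (x : E3) :
    ∑ i, pd (transport v l) i x * pd l i x
      = ∑ i, ∑ j, pd (fun y => v y j) i x * pd l j x * pd l i x
        + 1 / 2 * ∑ j, pd (fun y => ∑ m, pd l m y ^ 2) j x * v x j
        + 1 / 4 * ∑ i, pd (fun y => l y ^ 2) i x * pd (divg v) i x
        + 1 / 2 * ((∑ m, pd l m x ^ 2) * divg v x) := by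
  have hlj : ∀ j, DifferentiableAt ℝ (pd l j) x := fun j =>
    (contDiff_pd hl (m := 1) (by norm_num) j).differentiable one_ne_zero x
  have hq : ∀ j, pd (fun y => ∑ m, pd l m y ^ 2) j x = ∑ m, 2 * pd l m x * pd (pd l m) j x :=
    fun j => by
      rw [pd_sum (f := fun m y => pd l m y ^ 2) _ fun m _ => (hlj m).pow 2]
      exact Finset.sum_congr rfl fun m _ => pd_sq (hlj m)
  have hsq : ∀ i, pd (fun y => l y ^ 2) i x = 2 * l x * pd l i x :=
    fun i => pd_sq (hl.differentiable (by norm_num) x)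
  simp only [pd_transport hv hl, hq, hsq]
  simp only [Fin.sum_univ_three]
  ring

lemma integral_sum_pd_transport_mul_pd (hv : ContDiff ℝ 3 v) (hl : ContDiff ℝ 2 l)
    (hls : HasCompactSupport l) :
    ∫ x, ∑ i, pd (transport v l) i x * pd l i x
      = (∫ x, ∑ i, ∑ j, pd (fun y => v y j) i x * pd l j x * pd l i x)
        - 1 / 4 * ∫ x, l x ^ 2 * lap (divg v) x := by
  set q : E3 → ℝ := fun y => ∑ m, pd l m y ^ 2
  have hv1 : ContDiff ℝ 1 v := hv.of_le (by norm_num)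
  have hvj : ∀ j, Continuous (fun y => v y j) := fun j => (contDiff_euclidean.1 hv1 j).continuous
  have hdl : ∀ i, ContDiff ℝ 1 (pd l i) := fun i => contDiff_pd hl (by norm_num) i
  have hq : ContDiff ℝ 1 q := ContDiff.sum fun m _ => (hdl m).pow 2
  have hqs : HasCompactSupport q := HasCompactSupport.finsetSum _ fun m _ =>
    (hls.pd m).comp_left (g := fun t => t ^ 2) (by norm_num)
  have hsq : ContDiff ℝ 1 (fun y => l y ^ 2) := (hl.of_le (by norm_num)).pow 2
  have hsqs : HasCompactSupport (fun y => l y ^ 2) :=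
    hls.comp_left (g := fun t => t ^ 2) (by norm_num)
  have hdiv : ContDiff ℝ 2 (divg v) := contDiff_divg hv (by norm_num)
  have iJ : Integrable (fun x => ∑ i, ∑ j, pd (fun y => v y j) i x * pd l j x * pd l i x) :=
    integrable_finsetSum _ fun i _ => integrable_finsetSum _ fun j _ =>
      (((continuous_pd (contDiff_euclidean.1 hv1 j) le_rfl i).mul (hdl j).continuous).mul
        (hdl i).continuous).integrable_of_hasCompactSupport (hls.pd i).mul_left
  have iA : Integrable (fun x => 1 / 2 * ∑ j, pd q j x * v x j) :=
    (integrable_finsetSum _ fun j _ => ((continuous_pd hq le_rfl j).mul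
      (hvj j)).integrable_of_hasCompactSupport (hqs.pd j).mul_right).const_mul _
  have iB : Integrable (fun x => 1 / 4 * ∑ i, pd (fun y => l y ^ 2) i x * pd (divg v) i x) :=
    (integrable_finsetSum _ fun i _ => ((continuous_pd hsq le_rfl i).mul
      (continuous_pd hdiv (by norm_num) i)).integrable_of_hasCompactSupport
        (hsqs.pd i).mul_right).const_mul _
  have iC : Integrable (fun x => 1 / 2 * (q x * divg v x)) :=
    ((hq.continuous.mul hdiv.continuous).integrable_of_hasCompactSupport hqs.mul_right).const_mul _
  simp only [sum_pd_transport_mul_pd (hv.of_le (by norm_num)) hl]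
  rw [integral_add ((iJ.fun_add iA).fun_add iB) iC, integral_add (iJ.fun_add iA) iB,
    integral_add iJ iA,
    integral_const_mul, integral_const_mul, integral_const_mul,
    integral_sum_pd_mul_apply hq hqs hv1, integral_sum_pd_mul_pd hsq hsqs hdiv]
  ring

lemma integral_sum_pd_mul_pd_eq_energy (ε k : ℝ) (hv : ContDiff ℝ 3 v) (hl : ContDiff ℝ 3 l)
    (hls : HasCompactSupport l) :
    ∫ x, ∑ i, pd (fun y => -ε * lap l y + k * l y + transport v l y) i x * pd l i x
      = ε * (∫ x, lap l x ^ 2) + k * (∫ x, ∑ i, pd l i x ^ 2)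
        + (∫ x, ∑ i, ∑ j, pd (fun y => v y j) i x * pd l j x * pd l i x)
        - 1 / 4 * ∫ x, l x ^ 2 * lap (divg v) x := by
  have hl1 : ContDiff ℝ 1 l := hl.of_le (by norm_num)
  have hlap : ContDiff ℝ 1 (lap l) := contDiff_lap hl (by norm_num)
  have htr : ContDiff ℝ 1 (transport v l) :=
    contDiff_transport (hv.of_le (by norm_num)) (hl.of_le (by norm_num))
  have hpd : ∀ i x, pd (fun y => -ε * lap l y + k * l y + transport v l y) i x
      = -ε * pd (lap l) i x + k * pd l i x + pd (transport v l) i x := fun i x => by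
    have hA : DifferentiableAt ℝ (fun y => -ε * lap l y) x :=
      (hlap.differentiable one_ne_zero x).const_mul _
    have hB : DifferentiableAt ℝ (fun y => k * l y) x :=
      (hl1.differentiable one_ne_zero x).const_mul _
    rw [pd_add (hA.fun_add hB) (htr.differentiable one_ne_zero x), pd_add hA hB,
      pd_const_mul _ (hlap.differentiable one_ne_zero x),
      pd_const_mul _ (hl1.differentiable one_ne_zero x)]
  have hsplit : ∀ x, ∑ i, pd (fun y => -ε * lap l y + k * l y + transport v l y) i x * pd l i x
      = -ε * ∑ i, pd (lap l) i x * pd l i x + k * ∑ i, pd l i x * pd l i x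
        + ∑ i, pd (transport v l) i x * pd l i x := fun x => by
    simp only [hpd, Fin.sum_univ_three]
    ring
  simp only [hsplit]
  rw [integral_add (((integrable_sum_pd_mul_pd hlap hl1 hls).const_mul _).fun_add
      ((integrable_sum_pd_mul_pd hl1 hl1 hls).const_mul _)) (integrable_sum_pd_mul_pd htr hl1 hls),
    integral_add ((integrable_sum_pd_mul_pd hlap hl1 hls).const_mul _)
      ((integrable_sum_pd_mul_pd hl1 hl1 hls).const_mul _),
    integral_const_mul, integral_const_mul,
    integral_sum_pd_mul_pd hlap hls.lap (hl.of_le (by norm_num)),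
    integral_sum_pd_transport_mul_pd hv (hl.of_le (by norm_num)) hls]
  simp only [sq]
  ring

end Transport

section MeanInequalities

variable {α : Type*} [MeasurableSpace α] {μ : Measure α}

lemma abs_integral_mul_le_sqrt_mul_sqrt {f g : α → ℝ} (hf : MemLp f 2 μ) (hg : MemLp g 2 μ) :
    |∫ x, f x * g x ∂μ| ≤ √(∫ x, f x ^ 2 ∂μ) * √(∫ x, g x ^ 2 ∂μ) := by
  have h := integral_mul_norm_le_Lp_mul_Lq (μ := μ) Real.HolderConjugate.two_two
    (by simpa using hf) (by simpa using hg)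
  simp only [Real.norm_eq_abs, Real.rpow_two, sq_abs, ← Real.sqrt_eq_rpow] at h
  refine (abs_integral_le_integral_abs).trans ?_
  simpa only [abs_mul] using h

lemma integral_sum_mul_le_sqrt_mul_sqrt {ι : Type*} [Fintype ι] {f g : ι → α → ℝ}
    (hf : ∀ i, MemLp (f i) 2 μ) (hg : ∀ i, MemLp (g i) 2 μ) :
    ∫ x, ∑ i, f i x * g i x ∂μ ≤ √(∫ x, ∑ i, f i x ^ 2 ∂μ) * √(∫ x, ∑ i, g i x ^ 2 ∂μ) := by
  have hfg : ∀ i, Integrable (fun x => f i x * g i x) μ := fun i => (hf i).integrable_mul (hg i)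
  rw [integral_finsetSum _ fun i _ => hfg i, integral_finsetSum _ fun i _ => (hf i).integrable_sq,
    integral_finsetSum _ fun i _ => (hg i).integrable_sq]
  calc ∑ i, ∫ x, f i x * g i x ∂μ
      ≤ ∑ i, √(∫ x, f i x ^ 2 ∂μ) * √(∫ x, g i x ^ 2 ∂μ) :=
        Finset.sum_le_sum fun i _ =>
          (le_abs_self _).trans (abs_integral_mul_le_sqrt_mul_sqrt (hf i) (hg i))
    _ ≤ _ := Real.sum_sqrt_mul_sqrt_le _ (fun i => integral_nonneg fun x => sq_nonneg _)
        (fun i => integral_nonneg fun x => sq_nonneg _)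

lemma integral_pow_four_le [IsFiniteMeasure μ] {f : α → ℝ} (hf : MemLp f 6 μ) :
    ∫ x, f x ^ 4 ∂μ ≤ (∫ x, |f x| ^ 6 ∂μ) ^ (2 / 3 : ℝ) * μ.real Set.univ ^ (1 / 3 : ℝ) := by
  have hf4 : MemLp (fun x => f x ^ 4) (ENNReal.ofReal (3 / 2)) μ := by
    convert hf.norm_rpow_div 4 using 1
    · funext x
      rw [Real.norm_eq_abs, ENNReal.toReal_ofNat, Real.rpow_ofNat, Even.pow_abs (by decide)]
    · rw [ENNReal.ofReal_div_of_pos (by norm_num),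
        ENNReal.div_eq_div_iff (by norm_num) (by norm_num) (by norm_num) (by norm_num)]
      norm_num
  have h := integral_mul_le_Lp_mul_Lq_of_nonneg (μ := μ) (p := 3 / 2) (q := 3)
    (Real.holderConjugate_iff.mpr ⟨by norm_num, by norm_num⟩)
    (Filter.Eventually.of_forall fun x => by positivity)
    (Filter.Eventually.of_forall fun _ => zero_le_one) hf4 (memLp_const 1)
  have h6 : ∀ x, (f x ^ 4) ^ (3 / 2 : ℝ) = |f x| ^ 6 := fun x => by
    rw [← Even.pow_abs (by decide), ← Real.rpow_natCast |f x| 4, ← Real.rpow_mul (abs_nonneg _)]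
    norm_num
  simp only [mul_one, h6, Real.one_rpow, integral_const, smul_eq_mul] at h
  convert h using 2
  norm_num

end MeanInequalities

lemma abs_sum_sum_apply_single_mul_le {ι : Type*} [Fintype ι] [DecidableEq ι]
    (A : EuclideanSpace ℝ ι →L[ℝ] EuclideanSpace ℝ ι) (w : EuclideanSpace ℝ ι) :
    |∑ i, ∑ j, A (EuclideanSpace.single i 1) j * w j * w i| ≤ ‖A‖ * ∑ i, w i ^ 2 := by
  have hAw : A w = ∑ i, w i • A (EuclideanSpace.single i 1) := by
    conv_lhs => rw [← (EuclideanSpace.basisFun ι ℝ).sum_repr w]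
    simp
  have hform : ∑ i, ∑ j, A (EuclideanSpace.single i 1) j * w j * w i = inner ℝ (A w) w := by
    simp [hAw, sum_inner, PiLp.inner_apply, mul_comm, mul_left_comm]
  have hw : ‖w‖ ^ 2 = ∑ i, w i ^ 2 := by simp [EuclideanSpace.norm_sq_eq]
  rw [hform, ← hw]
  calc |inner ℝ (A w) w| ≤ ‖A w‖ * ‖w‖ := abs_real_inner_le_norm _ _
    _ ≤ ‖A‖ * ‖w‖ * ‖w‖ := mul_le_mul_of_nonneg_right (A.le_opNorm w) (norm_nonneg _)
    _ = ‖A‖ * ‖w‖ ^ 2 := by ring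

lemma abs_integral_jacobian_form_le {v : E3 → E3} {l : E3 → ℝ} {O : Set E3} {M : ℝ}
    (hv : Differentiable ℝ v) (hl : ContDiff ℝ 1 l) (hls : HasCompactSupport l)
    (hlO : tsupport l ⊆ O) (hjac : ∀ x ∈ O, ‖fderiv ℝ v x‖ ≤ M) :
    |∫ x, ∑ i, ∑ j, pd (fun y => v y j) i x * pd l j x * pd l i x|
      ≤ M * ∫ x, ∑ i, pd l i x ^ 2 := by
  rw [← integral_const_mul, ← Real.norm_eq_abs]
  refine norm_integral_le_of_norm_le ((integrable_sum_pd_sq hl hls).const_mul M)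
    (ae_of_all _ fun x => ?_)
  by_cases hx : x ∈ tsupport l
  · have h := abs_sum_sum_apply_single_mul_le (fderiv ℝ v x) (WithLp.toLp 2 fun i => pd l i x)
    simp only [Real.norm_eq_abs, pd_apply (hv x)]
    exact h.trans
      (mul_le_mul_of_nonneg_right (hjac x (hlO hx)) (Finset.sum_nonneg fun i _ => sq_nonneg _))
  · simp [pd_eq_zero_of_notMem_tsupport hx]

lemma abs_integral_sq_mul_le {O : Set E3} (hO : Bornology.IsBounded O) {h l : E3 → ℝ}
    (hh : Continuous h) (hl : Continuous l) (hlO : tsupport l ⊆ O) :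
    |∫ x, l x ^ 2 * h x|
      ≤ √(∫ x in O, h x ^ 2) * ((∫ x, |l x| ^ 6) ^ (1 / 6 : ℝ)) ^ 2
        * (volume O).toReal ^ (1 / 6 : ℝ) := by
  have hls : HasCompactSupport l :=
    Metric.isCompact_of_isClosed_isBounded (isClosed_tsupport l) (hO.subset hlO)
  have hlO' : ∀ x ∉ O, l x = 0 := fun x hx => image_eq_zero_of_notMem_tsupport fun h => hx (hlO h)
  have : IsFiniteMeasure (volume.restrict O) := isFiniteMeasure_restrict.2 hO.measure_lt_top.ne
  have hhO : MemLp h 2 (volume.restrict O) :=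
    (memLp_two_iff_integrable_sq hh.aestronglyMeasurable).2
      (((hh.pow 2).continuousOn.integrableOn_compact hO.isCompact_closure).mono_set subset_closure)
  have hls2 : HasCompactSupport (fun x => l x ^ 2) := hls.comp_left (g := fun t => t ^ 2) (by simp)
  have hl2 : MemLp (fun x => l x ^ 2) 2 (volume.restrict O) :=
    ((hl.pow 2).memLp_of_hasCompactSupport (μ := volume) hls2).restrict O
  have hl6 : MemLp l 6 (volume.restrict O) :=
    (hl.memLp_of_hasCompactSupport (μ := volume) hls).restrict O
  have hA : 0 ≤ ∫ x in O, |l x| ^ 6 := integral_nonneg fun x => by positivity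
  have hV : 0 ≤ (volume O).toReal := ENNReal.toReal_nonneg
  rw [← setIntegral_eq_integral_of_forall_compl_eq_zero (s := O) fun x hx => by simp [hlO' x hx],
    ← setIntegral_eq_integral_of_forall_compl_eq_zero (s := O) (f := fun x => |l x| ^ 6)
      fun x hx => by simp [hlO' x hx]]
  calc |∫ x in O, l x ^ 2 * h x|
      ≤ √(∫ x in O, (l x ^ 2) ^ 2) * √(∫ x in O, h x ^ 2) :=
        abs_integral_mul_le_sqrt_mul_sqrt hl2 hhO
    _ ≤ √((∫ x in O, |l x| ^ 6) ^ (2 / 3 : ℝ) * (volume O).toReal ^ (1 / 3 : ℝ))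
          * √(∫ x in O, h x ^ 2) := by
      gcongr
      simpa [← pow_mul, measureReal_def] using integral_pow_four_le hl6
    _ = _ := by
      rw [Real.sqrt_eq_rpow, Real.mul_rpow (by positivity) (by positivity), ← Real.rpow_mul hA,
        ← Real.rpow_mul hV, ← Real.rpow_natCast, ← Real.rpow_mul hA]
      norm_num
      ring

lemma half_mul_integral_sum_pd_sq_le {O : Set E3} (hO : Bornology.IsBounded O) {k ε CS M : ℝ}
    (hε : 0 ≤ ε) (hCS : 0 ≤ CS) {v : E3 → E3} (hv : ContDiff ℝ 3 v)
    (hjac : ∀ x ∈ O, ‖fderiv ℝ v x‖ ≤ M)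
    (hsmall : 2 * M + CS / 2 * (volume O).toReal ^ (1 / 6 : ℝ)
        * (∫ x in O, lap (divg v) x ^ 2) ^ (1 / 2 : ℝ) ≤ k)
    {l : E3 → ℝ} (hl : ContDiff ℝ 3 l) (hlO : tsupport l ⊆ O)
    (hsob : (∫ x, |l x| ^ 6) ^ (1 / 6 : ℝ) ≤ √CS * (∫ x, ∑ i, pd l i x ^ 2) ^ (1 / 2 : ℝ)) :
    k / 2 * ∫ x, ∑ i, pd l i x ^ 2
      ≤ ∫ x, ∑ i, pd (fun y => -ε * lap l y + k * l y + transport v l y) i x * pd l i x := by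
  set N := ∫ x, ∑ i, pd l i x ^ 2
  have hN : 0 ≤ N := integral_nonneg fun x => Finset.sum_nonneg fun i _ => sq_nonneg _
  have hls : HasCompactSupport l :=
    Metric.isCompact_of_isClosed_isBounded (isClosed_tsupport l) (hO.subset hlO)
  have hJ := abs_integral_jacobian_form_le (hv.differentiable (by norm_num))
    (hl.of_le (by norm_num)) hls hlO hjac
  have hL6 : ((∫ x, |l x| ^ 6) ^ (1 / 6 : ℝ)) ^ 2 ≤ CS * N :=
    calc _ ≤ (√CS * N ^ (1 / 2 : ℝ)) ^ 2 := pow_le_pow_left₀ (by positivity) hsob 2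
      _ = CS * N := by rw [mul_pow, Real.sq_sqrt hCS, ← Real.sqrt_eq_rpow, Real.sq_sqrt hN]
  have hR := (abs_integral_sq_mul_le hO
    (contDiff_lap (contDiff_divg hv (m := 2) (by norm_num)) (m := 0) (by norm_num)).continuous
    hl.continuous hlO).trans (by gcongr : _ ≤ √(∫ x in O, lap (divg v) x ^ 2) * (CS * N)
      * (volume O).toReal ^ (1 / 6 : ℝ))
  rw [Real.sqrt_eq_rpow] at hR
  have hlap : 0 ≤ ∫ x, lap l x ^ 2 := integral_nonneg fun x => sq_nonneg _
  rw [integral_sum_pd_mul_pd_eq_energy ε k hv hl hls]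
  nlinarith [abs_le.mp hJ, abs_le.mp hR, mul_le_mul_of_nonneg_right hsmall hN, mul_nonneg hε hlap]

lemma sqrt_le_div_of_mul_le_mul_sqrt {a b t : ℝ} (ha : 0 < a) (hb : 0 ≤ b) (ht : 0 ≤ t)
    (h : a * t ≤ b * √t) : √t ≤ b / a := by
  rcases (Real.sqrt_nonneg t).eq_or_lt with h0 | hpos
  · rw [← h0]
    positivity
  · rw [le_div_iff₀ ha]
    nlinarith [Real.sq_sqrt ht]

theorem uniform_gradient_estimate_general
    (O : Set (EuclideanSpace ℝ (Fin 3)))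
    (hObdd : Bornology.IsBounded O)
    (k ε CS M : ℝ) (hk : 0 < k) (hε : 0 < ε) (hCS : 0 < CS)
    (v : EuclideanSpace ℝ (Fin 3) → EuclideanSpace ℝ (Fin 3)) (hv : ContDiff ℝ 3 v)
    (hjac : ∀ x ∈ O, ‖fderiv ℝ v x‖ ≤ M)
    (hsmall : 2 * M + (CS / 2) * (volume O).toReal ^ ((1 : ℝ) / 6)
        * (∫ x in O, (lap (divg v) x) ^ 2) ^ ((1 : ℝ) / 2) ≤ k)
    (l : EuclideanSpace ℝ (Fin 3) → ℝ)
    (hl : ContDiff ℝ 3 l) (hlO : tsupport l ⊆ O)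
    (hsob : (∫ x, |l x| ^ (6 : ℕ)) ^ ((1 : ℝ) / 6)
      ≤ Real.sqrt CS * (∫ x, ∑ i, (pd l i x) ^ 2) ^ ((1 : ℝ) / 2))
    (G : EuclideanSpace ℝ (Fin 3) → ℝ)
    (hG : G = fun x => -ε * lap l x + k * l x + (∑ i, v x i * pd l i x)
        + (1 / 2) * divg v x * l x) :
    (∫ x, ∑ i, (pd l i x) ^ 2) ^ ((1 : ℝ) / 2)
      ≤ (2 / k) * (∫ x, ∑ i, (pd G i x) ^ 2) ^ ((1 : ℝ) / 2) := by
  have hls : HasCompactSupport l :=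
    Metric.isCompact_of_isClosed_isBounded (isClosed_tsupport l) (hObdd.subset hlO)
  have hl1 : ContDiff ℝ 1 l := hl.of_le (by norm_num)
  replace hG : G = fun x => -ε * lap l x + k * l x + transport v l x := by
    rw [hG]; funext x; simp only [transport]; ring
  have hG1 : ContDiff ℝ 1 G := hG ▸ ((contDiff_const.mul (contDiff_lap hl (by norm_num))).add
    (contDiff_const.mul hl1)).add
      (contDiff_transport (hv.of_le (by norm_num)) (hl.of_le (by norm_num)))
  have hGs : HasCompactSupport G :=
    hG ▸ (hls.lap.mul_left.add hls.mul_left).add (hasCompactSupport_transport hls)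
  have lower := half_mul_integral_sum_pd_sq_le hObdd hε.le hCS.le hv hjac hsmall hl hlO hsob
  have upper := integral_sum_mul_le_sqrt_mul_sqrt (μ := volume) (f := fun i => pd G i)
    (g := fun i => pd l i) (memLp_pd hG1 hGs) (memLp_pd hl1 hls)
  rw [← hG] at lower
  have h := sqrt_le_div_of_mul_le_mul_sqrt (half_pos hk) (Real.sqrt_nonneg _)
    (integral_nonneg fun x => Finset.sum_nonneg fun i _ => sq_nonneg _) (lower.trans upper)
  rw [← Real.sqrt_eq_rpow, ← Real.sqrt_eq_rpow]
  exact h.trans_eq (by ring)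

/-- uniform-in-ε gradient estimate
`‖∇λ‖_{L²} ≤ (2/k) ‖∇G‖_{L²}` for compactly supported strong solutions of the
regularized transport equation `-εΔλ + kλ + v·∇λ + ½(div v)λ = G`, under the
smallness condition `2M + (C_S/2)|O|^{1/6} ‖Δ div v‖_{L²(O)} ≤ k` on the
ambient field and the Sobolev embedding hypothesis on `λ`. -/
theorem uniform_gradient_estimate
    (O : Set (EuclideanSpace ℝ (Fin 3))) (hOopen : IsOpen O)
    (hObdd : Bornology.IsBounded O)
    (k ε CS M : ℝ) (hk : 0 < k) (hε : 0 < ε) (hCS : 0 < CS) (hM : 0 ≤ M)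
    (v : EuclideanSpace ℝ (Fin 3) → EuclideanSpace ℝ (Fin 3)) (hv : ContDiff ℝ 3 v)
    (hjac : ∀ x ∈ O, ‖fderiv ℝ v x‖ ≤ M)
    (hsmall : 2 * M + (CS / 2) * (volume O).toReal ^ ((1 : ℝ) / 6)
        * (∫ x in O, (lap (divg v) x) ^ 2) ^ ((1 : ℝ) / 2) ≤ k)
    (l : EuclideanSpace ℝ (Fin 3) → ℝ)
    (hl : ContDiff ℝ 3 l) (hls : HasCompactSupport l) (hlO : tsupport l ⊆ O)
    (hsob : (∫ x, |l x| ^ (6 : ℕ)) ^ ((1 : ℝ) / 6)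
      ≤ Real.sqrt CS * (∫ x, ∑ i, (pd l i x) ^ 2) ^ ((1 : ℝ) / 2))
    (G : EuclideanSpace ℝ (Fin 3) → ℝ)
    (hG : G = fun x => -ε * lap l x + k * l x + (∑ i, v x i * pd l i x)
        + (1 / 2) * divg v x * l x) :
    (∫ x, ∑ i, (pd l i x) ^ 2) ^ ((1 : ℝ) / 2)
      ≤ (2 / k) * (∫ x, ∑ i, (pd G i x) ^ 2) ^ ((1 : ℝ) / 2) :=
  uniform_gradient_estimate_general O hObdd k ε CS M hk hε hCS v hv hjac hsmall l hl hlO hsob G hG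

end
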